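/- arXiv:1706.03786 — 3 statements merged into one kernel-verified Lean document; each statement's English description precedes it below -/
import Mathlib

section
/- Let N ≥ 1, let μ be a probability measure on the unitary group U(N), let x be a fixed basis index, and let ε ∈ [0,1). Suppose the first two moments of the output probability p_x(U) = |⟨x|U|0⟩|² under μ match the Haar moments up to relative error ε, in the sense that ∫ p_x(U) dμ(U) ≥ (1−ε)/N and ∫ p_x(U)² dμ(U) ≤ (1+ε)·2/(N(N+1)). Then for every α ∈ [0,1], μ{ U : |⟨x|U|0⟩|² > α(1−ε)/N } ≥ (1−α)²(1−ε)²/(2(1+ε)). (This is the anticoncentration theorem for relative ε-approximate unitary 2-designs; the moment hypotheses are exactly the consequences of the relative 2-design property that the result uses.) -/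
open MeasureTheory

noncomputable section

/-- The unitary group `U(N)` of `N × N` complex unitary matrices. -/
abbrev UG (N : ℕ) := Matrix.unitaryGroup (Fin N) ℂ

noncomputable instance (N : ℕ) : MeasurableSpace (UG N) := borel _

instance (N : ℕ) : BorelSpace (UG N) := ⟨rfl⟩

/-- The output probability `p_x(U) = |⟨x|U|0⟩|²`, i.e. the squared modulus of the
`(x, 0)` matrix entry of the unitary `U`. -/
def outProb {N : ℕ} [NeZero N] (x : Fin N) (U : UG N) : ℝ :=
  ‖(U : Matrix (Fin N) (Fin N) ℂ) x 0‖ ^ 2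

/-!
The moment hypotheses feed the Paley–Zygmund inequality
`(𝔼 f - t)² ≤ 𝔼 f² · μ{t < f}`, which follows from splitting `𝔼 f` at the threshold `t` and
applying Cauchy–Schwarz on the event `{t < f}`. With `t = α(1-ε)/N` the first moment bound
gives `𝔼 f - t ≥ (1-α)(1-ε)/N`, and the second moment bound `𝔼 f² ≤ 2(1+ε)/N²` then
yields `μ{t < f} ≥ (1-α)²(1-ε)²/(2(1+ε))`.
-/

section PaleyZygmund

variable {Ω : Type*} [MeasurableSpace Ω]

theorem sq_integral_le_measureReal_univ_mul_integral_sq {ν : Measure Ω} [IsFiniteMeasure ν]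
    {f : Ω → ℝ} (hf : Integrable f ν) (hf2 : Integrable (fun ω ↦ f ω ^ 2) ν) :
    (∫ ω, f ω ∂ν) ^ 2 ≤ ν.real Set.univ * ∫ ω, f ω ^ 2 ∂ν := by
  -- `c ↦ ∫ (f - c)²` is a nonnegative quadratic, so its discriminant is nonpositive
  have hquad : ∀ c : ℝ, 0 ≤ ν.real Set.univ * (c * c) + (-2 * ∫ ω, f ω ∂ν) * c
      + ∫ ω, f ω ^ 2 ∂ν := by
    intro c
    have hint : 0 ≤ ∫ ω, (f ω ^ 2 - c * 2 * f ω + c * c) ∂ν :=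
      integral_nonneg fun ω ↦ show 0 ≤ _ by nlinarith [sq_nonneg (f ω - c)]
    rw [integral_add (by exact hf2.sub (hf.const_mul _)) (integrable_const _),
      integral_sub hf2 (hf.const_mul _), integral_const_mul, integral_const, smul_eq_mul] at hint
    linarith
  have hdiscrim := discrim_le_zero hquad
  rw [discrim] at hdiscrim
  linarith

theorem sq_integral_sub_le_integral_sq_mul_measureReal_lt {μ : Measure Ω} [IsProbabilityMeasure μ]
    {f : Ω → ℝ} (hfm : Measurable f) (hf : Integrable f μ)
    (hf2 : Integrable (fun ω ↦ f ω ^ 2) μ) {t : ℝ} (ht0 : 0 ≤ t) (ht : t ≤ ∫ ω, f ω ∂μ) :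
    (∫ ω, f ω ∂μ - t) ^ 2 ≤ (∫ ω, f ω ^ 2 ∂μ) * μ.real {ω | t < f ω} := by
  set A := {ω | t < f ω}
  have hA : MeasurableSet A := measurableSet_lt measurable_const hfm
  have hpointwise : ∀ ω, f ω ≤ t + A.indicator f ω := by
    intro ω
    by_cases h : ω ∈ A
    · rw [Set.indicator_of_mem h]; linarith
    · rw [Set.indicator_of_notMem h, add_zero]; exact not_lt.mp h
  have hsplit : ∫ ω, f ω ∂μ ≤ t + ∫ ω in A, f ω ∂μ := by
    calc ∫ ω, f ω ∂μ ≤ ∫ ω, (t + A.indicator f ω) ∂μ :=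
          integral_mono hf ((integrable_const t).add (hf.indicator hA)) hpointwise
      _ = t + ∫ ω in A, f ω ∂μ := by
          rw [integral_add (integrable_const t) (hf.indicator hA), integral_indicator hA]
          simp
  calc (∫ ω, f ω ∂μ - t) ^ 2 ≤ (∫ ω in A, f ω ∂μ) ^ 2 :=
        pow_le_pow_left₀ (by linarith) (by linarith) 2
    _ ≤ μ.real A * ∫ ω in A, f ω ^ 2 ∂μ := by
        simpa using sq_integral_le_measureReal_univ_mul_integral_sq hf.restrict hf2.restrict
    _ ≤ μ.real A * ∫ ω, f ω ^ 2 ∂μ :=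
        mul_le_mul_of_nonneg_left
          (setIntegral_le_integral hf2 (ae_of_all _ fun _ ↦ sq_nonneg _)) measureReal_nonneg
    _ = (∫ ω, f ω ^ 2 ∂μ) * μ.real A := mul_comm _ _

end PaleyZygmund

section OutputProbability

variable {N : ℕ} [NeZero N]

theorem continuous_outProb (x : Fin N) : Continuous (outProb x) := by
  have hentry : Continuous fun U : UG N ↦ (U : Matrix (Fin N) (Fin N) ℂ) x 0 :=
    (continuous_apply_apply x 0).comp continuous_subtype_val
  exact hentry.norm.pow 2

theorem outProb_le_one (x : Fin N) (U : UG N) : outProb x U ≤ 1 :=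
  pow_le_one₀ (norm_nonneg _) (entry_norm_bound_of_unitary U.2 x 0)

theorem integrable_outProb_pow (μ : Measure (UG N)) [IsFiniteMeasure μ] (x : Fin N) (n : ℕ) :
    Integrable (fun U ↦ outProb x U ^ n) μ :=
  .of_bound ((continuous_outProb x).pow n).aestronglyMeasurable 1 <| ae_of_all _ fun U ↦ by
    have h0 : 0 ≤ outProb x U := sq_nonneg _
    rw [Real.norm_of_nonneg (pow_nonneg h0 n)]
    exact pow_le_one₀ h0 (outProb_le_one x U)

end OutputProbability

/-- **Anticoncentration of relative ε-approximate unitary 2-designs.**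
If the first two moments of the output probability `p_x(U) = |⟨x|U|0⟩|²` under a
probability measure `μ` on `U(N)` match the Haar moments `1/N` and `2/(N(N+1))` up
to relative error `ε`, then for every `α ∈ [0,1]`,
`μ{ U : |⟨x|U|0⟩|² > α(1−ε)/N } ≥ (1−α)²(1−ε)²/(2(1+ε))`. -/
theorem anticoncentration_of_two_design
    (N : ℕ) [NeZero N] (μ : Measure (UG N)) [IsProbabilityMeasure μ]
    (x : Fin N) (ε : ℝ) (hε0 : 0 ≤ ε) (hε1 : ε < 1)
    (hmom1 : (1 - ε) / N ≤ ∫ U, outProb x U ∂μ)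
    (hmom2 : ∫ U, (outProb x U) ^ 2 ∂μ ≤ (1 + ε) * (2 / (N * (N + 1))))
    (α : ℝ) (hα0 : 0 ≤ α) (hα1 : α ≤ 1) :
    ENNReal.ofReal ((1 - α) ^ 2 * (1 - ε) ^ 2 / (2 * (1 + ε)))
      ≤ μ {U : UG N | α * (1 - ε) / N < outProb x U} := by
  have hN : (0 : ℝ) < N := Nat.cast_pos.mpr (NeZero.pos N)
  set t := α * (1 - ε) / N
  set m := μ.real {U : UG N | t < outProb x U}
  have hgap : (1 - α) * (1 - ε) / N ≤ ∫ U, outProb x U ∂μ - t := by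
    have hsum : t + (1 - α) * (1 - ε) / N = (1 - ε) / N := by simp only [t]; field_simp; ring
    linarith
  have hgap0 : 0 ≤ (1 - α) * (1 - ε) / N := by
    apply div_nonneg _ hN.le; nlinarith
  have hPZ := sq_integral_sub_le_integral_sq_mul_measureReal_lt (μ := μ)
    (continuous_outProb x).measurable (by simpa using integrable_outProb_pow μ x 1)
    (integrable_outProb_pow μ x 2) (t := t) (div_nonneg (by nlinarith) hN.le) (by linarith)
  have hmom2' : ∫ U, outProb x U ^ 2 ∂μ ≤ (1 + ε) * (2 / N ^ 2) :=
    hmom2.trans (by gcongr; nlinarith)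
  have hkey : (1 - α) ^ 2 * (1 - ε) ^ 2 ≤ 2 * (1 + ε) * m := by
    rw [← div_le_div_iff_of_pos_right (pow_pos hN 2)]
    calc (1 - α) ^ 2 * (1 - ε) ^ 2 / N ^ 2 = ((1 - α) * (1 - ε) / N) ^ 2 := by ring
      _ ≤ (∫ U, outProb x U ∂μ - t) ^ 2 := pow_le_pow_left₀ hgap0 hgap 2
      _ ≤ (∫ U, outProb x U ^ 2 ∂μ) * m := hPZ
      _ ≤ (1 + ε) * (2 / N ^ 2) * m := mul_le_mul_of_nonneg_right hmom2' measureReal_nonneg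
      _ = 2 * (1 + ε) * m / N ^ 2 := by ring
  apply ENNReal.ofReal_le_of_le_toReal
  change _ ≤ m
  rw [div_le_iff₀ (by linarith)]
  linarith
end
end

section
/- Let N ≥ 1 and let x be a fixed basis index. The second moment of the output probability of a Haar-random N×N unitary satisfies ∫ |⟨x|U|0⟩|⁴ dμ_Haar(U) = 2/(N(N+1)). -/
open MeasureTheory

noncomputable section

/-!
The first column `v` of a Haar unitary has a law invariant under every unitary, in particular
under coordinate permutations, diagonal phases and the rotations `cos θ + i sin θ P`, `P` the
matrix of a transposition. Write `α = E |v_x|⁴` and `β = E |v_x|² |v_y|²` for `x ≠ y`.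
Since `∑ₖ |v_k|² = 1`, permutation invariance gives `E |v_x|² = 1 / N` and then
`α + (N - 1) β = 1 / N`. A rotation by `π / 4` followed by a phase shows
`E |v_x + t v_y|⁴ = 4 α` for every `|t| = 1`; summing over `t ∈ {±1, ±i}`, where
`∑ₜ |a + t b|⁴ = 4 |a|⁴ + 4 |b|⁴ + 16 |a|² |b|²`, yields `16 α = 8 α + 16 β`, i.e. `β = α / 2`.
-/

open Matrix Equiv

theorem smul_one_add_smul_mem_unitary_of_involution {A : Type*} [Ring A] [StarRing A]
    [Algebra ℂ A] [StarModule ℂ A] {P : A} (hP : IsSelfAdjoint P) (hP2 : P * P = 1)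
    {a b : ℝ} (hab : a ^ 2 + b ^ 2 = 1) :
    (a : ℂ) • (1 : A) + (b * Complex.I) • P ∈ unitary A := by
  have hstar : star ((a : ℂ) • (1 : A) + (b * Complex.I) • P)
      = (a : ℂ) • 1 - (b * Complex.I) • P := by
    simp [star_smul, hP.star_eq, sub_eq_add_neg]
  have hab' : (a : ℂ) ^ 2 + (b : ℂ) ^ 2 = 1 := by exact_mod_cast hab
  rw [Unitary.mem_iff, hstar]
  constructor <;>
  · simp only [sub_mul, add_mul, mul_sub, mul_add, one_mul, mul_one, smul_mul_assoc,
      mul_smul_comm, hP2]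
    match_scalars <;> first | ring1 | linear_combination hab' - (b : ℂ) ^ 2 * Complex.I_sq

theorem Matrix.permMatrix_mem_unitaryGroup {n α : Type*} [Fintype n] [DecidableEq n]
    [CommRing α] [StarRing α] (σ : Perm n) : σ.permMatrix α ∈ unitaryGroup n α := by
  rw [mem_unitaryGroup_iff', star_eq_conjTranspose, conjTranspose_permMatrix, ← permMatrix_mul,
    mul_inv_cancel, permMatrix_one]

theorem Matrix.diagonal_mem_unitaryGroup {n α : Type*} [Fintype n] [DecidableEq n]
    [CommRing α] [StarRing α] {d : n → α} (hd : ∀ i, star (d i) * d i = 1) :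
    diagonal d ∈ unitaryGroup n α := by
  rw [mem_unitaryGroup_iff', star_eq_conjTranspose, diagonal_conjTranspose,
    diagonal_mul_diagonal, ← diagonal_one]
  exact congrArg diagonal (funext hd)

def column {N : ℕ} (j : Fin N) (U : UG N) : Fin N → ℂ :=
  fun k => (U : Matrix (Fin N) (Fin N) ℂ) k j

theorem continuous_column {N : ℕ} (j : Fin N) : Continuous (column j) :=
  continuous_pi fun k => continuous_subtype_val.matrix_elem k j

theorem norm_column_le_one {N : ℕ} (j : Fin N) (U : UG N) : ‖column j U‖ ≤ 1 :=
  (pi_norm_le_iff_of_nonneg zero_le_one).2 fun k => entry_norm_bound_of_unitary U.2 k j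

theorem sum_norm_sq_column {N : ℕ} (j : Fin N) (U : UG N) : ∑ k, ‖column j U k‖ ^ 2 = 1 := by
  have h := congrFun (congrFun (Matrix.mem_unitaryGroup_iff'.mp U.2) j) j
  simp only [Matrix.mul_apply, Matrix.star_apply, Matrix.one_apply_eq, RCLike.star_def,
    Complex.conj_mul'] at h
  exact_mod_cast h

theorem integrable_comp_column {N : ℕ} (μ : Measure (UG N)) [IsFiniteMeasure μ] (j : Fin N)
    (g : (Fin N → ℂ) → ℝ) (hg : Continuous g) : Integrable (fun U => g (column j U)) μ := by
  obtain ⟨C, hC⟩ := (isCompact_closedBall (0 : Fin N → ℂ) 1).exists_bound_of_continuousOn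
    hg.continuousOn
  refine Integrable.of_bound (hg.comp (continuous_column j)).aestronglyMeasurable C
    (Filter.Eventually.of_forall fun U => hC _ ?_)
  simpa using norm_column_le_one j U

section Invariance

variable {N : ℕ} (μ : Measure (UG N)) [μ.IsMulLeftInvariant]

theorem integral_comp_mulVec_column (W : UG N) (j : Fin N) (f : (Fin N → ℂ) → ℝ) :
    ∫ U, f ((W : Matrix (Fin N) (Fin N) ℂ) *ᵥ column j U) ∂μ = ∫ U, f (column j U) ∂μ :=
  integral_mul_left_eq_self (fun U => f (column j U)) W

theorem integral_comp_column_comp_perm (σ : Perm (Fin N)) (j : Fin N) (f : (Fin N → ℂ) → ℝ) :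
    ∫ U, f (column j U ∘ σ) ∂μ = ∫ U, f (column j U) ∂μ := by
  simpa only [permMatrix_mulVec] using
    integral_comp_mulVec_column μ ⟨_, permMatrix_mem_unitaryGroup σ⟩ j f

theorem integral_comp_mul_column {d : Fin N → ℂ} (hd : ∀ k, ‖d k‖ = 1) (j : Fin N)
    (f : (Fin N → ℂ) → ℝ) : ∫ U, f (d * column j U) ∂μ = ∫ U, f (column j U) ∂μ := by
  have hmem : diagonal d ∈ unitaryGroup (Fin N) ℂ :=
    diagonal_mem_unitaryGroup fun k => by
      rw [RCLike.star_def, Complex.conj_mul', hd, Complex.ofReal_one, one_pow]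
  have hmulVec : ∀ v, diagonal d *ᵥ v = d * v := fun v => funext (mulVec_diagonal d v)
  simpa only [hmulVec] using integral_comp_mulVec_column μ ⟨_, hmem⟩ j f

theorem integral_comp_smul_column_add_smul_comp_swap {x y : Fin N} (j : Fin N) {a b : ℝ}
    (hab : a ^ 2 + b ^ 2 = 1) (f : (Fin N → ℂ) → ℝ) :
    ∫ U, f ((a : ℂ) • column j U + (b * Complex.I) • (column j U ∘ swap x y)) ∂μ
      = ∫ U, f (column j U) ∂μ := by
  have hP : IsSelfAdjoint ((swap x y).permMatrix ℂ) := by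
    rw [IsSelfAdjoint, star_eq_conjTranspose, conjTranspose_permMatrix, swap_inv]
  have hP2 : (swap x y).permMatrix ℂ * (swap x y).permMatrix ℂ = 1 := by
    rw [← permMatrix_mul, Equiv.swap_mul_self, permMatrix_one]
  have hmulVec : ∀ v, ((a : ℂ) • (1 : Matrix (Fin N) (Fin N) ℂ)
      + (b * Complex.I) • (swap x y).permMatrix ℂ) *ᵥ v
      = (a : ℂ) • v + (b * Complex.I) • (v ∘ swap x y) := fun v => by
    rw [add_mulVec, smul_mulVec, smul_mulVec, one_mulVec, permMatrix_mulVec]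
  simpa only [hmulVec] using integral_comp_mulVec_column μ
    ⟨_, smul_one_add_smul_mem_unitary_of_involution hP hP2 hab⟩ j f

theorem integral_norm_add_mul_pow_four_column {x y : Fin N} (hxy : x ≠ y) (j : Fin N) {t : ℂ}
    (ht : ‖t‖ = 1) :
    ∫ U, ‖column j U x + t * column j U y‖ ^ 4 ∂μ = 4 * ∫ U, ‖column j U x‖ ^ 4 ∂μ := by
  -- Rotating by `π / 4` in the `(x, y)` plane turns `v x` into `(v x + i v y) / √2`;
  -- a phase on coordinate `y` then replaces `i` by `t`.
  set c : ℝ := (Real.sqrt 2)⁻¹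
  have hc : c ^ 2 + c ^ 2 = 1 := by
    rw [inv_pow, Real.sq_sqrt zero_le_two]; norm_num
  have hc4 : c ^ 4 = 1 / 4 := by
    rw [show c ^ 4 = (c ^ 2) ^ 2 by ring, inv_pow, Real.sq_sqrt zero_le_two]; norm_num
  have hd : ∀ k, ‖Function.update (1 : Fin N → ℂ) y (-Complex.I * t) k‖ = 1 := fun k => by
    rcases eq_or_ne k y with rfl | hk <;> simp [*]
  have hmix := integral_comp_smul_column_add_smul_comp_swap μ (x := x) (y := y) j hc
    fun v => ‖v x‖ ^ 4
  have hphase := integral_comp_mul_column μ hd j fun v => ‖v x + Complex.I * v y‖ ^ 4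
  simp only [Complex.coe_smul, Pi.add_apply, Pi.smul_apply, Complex.real_smul,
    Function.comp_apply, swap_apply_left, smul_eq_mul, Pi.mul_apply,
    Function.update_of_ne hxy, Function.update_self, Pi.one_apply, one_mul] at hmix hphase
  have hrot : ∀ a b : ℂ,
      ‖(c : ℂ) * a + c * Complex.I * b‖ ^ 4 = c ^ 4 * ‖a + Complex.I * b‖ ^ 4 := fun a b => by
    rw [show (c : ℂ) * a + c * Complex.I * b = c * (a + Complex.I * b) by ring, norm_mul,
      Complex.norm_real, Real.norm_of_nonneg (by positivity), mul_pow]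
  have hphase' : ∀ a b : ℂ, a + Complex.I * (-Complex.I * t * b) = a + t * b := fun a b => by
    linear_combination (-t * b) * Complex.I_mul_I
  simp only [hrot, integral_const_mul, hc4] at hmix
  simp only [hphase'] at hphase
  rw [hphase, ← hmix]
  ring

end Invariance

section Moments

variable {N : ℕ} (μ : Measure (UG N)) [μ.IsMulLeftInvariant] [IsProbabilityMeasure μ]

theorem integral_norm_sq_column (j x : Fin N) :
    ∫ U, ‖column j U x‖ ^ 2 ∂μ = 1 / N := by
  have hN : (N : ℝ) ≠ 0 := Nat.cast_ne_zero.2 x.pos.ne'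
  have hperm : ∀ k, ∫ U, ‖column j U k‖ ^ 2 ∂μ = ∫ U, ‖column j U x‖ ^ 2 ∂μ := fun k => by
    simpa using integral_comp_column_comp_perm μ (swap x k) j fun v => ‖v x‖ ^ 2
  have hsum : (N : ℝ) * ∫ U, ‖column j U x‖ ^ 2 ∂μ = 1 := calc
    (N : ℝ) * ∫ U, ‖column j U x‖ ^ 2 ∂μ = ∑ k, ∫ U, ‖column j U k‖ ^ 2 ∂μ := by
      simp [hperm]
    _ = ∫ U, ∑ k, ‖column j U k‖ ^ 2 ∂μ := (integral_finsetSum _ fun k _ =>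
      integrable_comp_column μ j (fun v => ‖v k‖ ^ 2) (by fun_prop)).symm
    _ = 1 := by simp [sum_norm_sq_column]
  rw [eq_div_iff hN, mul_comm, hsum]

theorem sum_integral_norm_sq_mul_norm_sq_column (j x : Fin N) :
    ∑ k, ∫ U, ‖column j U x‖ ^ 2 * ‖column j U k‖ ^ 2 ∂μ = 1 / N := by
  rw [← integral_finsetSum _ fun k _ =>
      integrable_comp_column μ j (fun v => ‖v x‖ ^ 2 * ‖v k‖ ^ 2) (by fun_prop),
    ← integral_norm_sq_column μ j x]
  simp [← Finset.mul_sum, sum_norm_sq_column]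

theorem sum_norm_add_mul_pow_four (a b : ℂ) :
    ∑ i, ‖a + ![1, -1, Complex.I, -Complex.I] i * b‖ ^ 4
      = 4 * ‖a‖ ^ 4 + 4 * ‖b‖ ^ 4 + 16 * (‖a‖ ^ 2 * ‖b‖ ^ 2) := by
  simp only [Fin.sum_univ_four, show ∀ z : ℂ, ‖z‖ ^ 4 = (‖z‖ ^ 2) ^ 2 from fun z => by ring,
    Complex.sq_norm, Complex.normSq_apply]
  simp only [Fin.isValue, cons_val_zero, cons_val_one, cons_val, one_mul, neg_mul,
    Complex.add_re, Complex.add_im, Complex.neg_re, Complex.neg_im, Complex.mul_re,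
    Complex.mul_im, Complex.I_re, Complex.I_im]
  ring

theorem integral_norm_sq_mul_norm_sq_column {x y : Fin N} (hxy : x ≠ y) (j : Fin N) :
    ∫ U, ‖column j U x‖ ^ 2 * ‖column j U y‖ ^ 2 ∂μ = (∫ U, ‖column j U x‖ ^ 4 ∂μ) / 2 := by
  have hint : ∀ g : (Fin N → ℂ) → ℝ, Continuous g → Integrable (fun U => g (column j U)) μ :=
    integrable_comp_column μ j
  have hswap : ∫ U, ‖column j U y‖ ^ 4 ∂μ = ∫ U, ‖column j U x‖ ^ 4 ∂μ := by
    simpa using integral_comp_column_comp_perm μ (swap x y) j fun v => ‖v x‖ ^ 4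
  have hpolar :
      ∫ U, ∑ i, ‖column j U x + ![1, -1, Complex.I, -Complex.I] i * column j U y‖ ^ 4 ∂μ
        = ∫ U, (4 * ‖column j U x‖ ^ 4 + 4 * ‖column j U y‖ ^ 4
          + 16 * (‖column j U x‖ ^ 2 * ‖column j U y‖ ^ 2)) ∂μ := by
    simp only [sum_norm_add_mul_pow_four]
  rw [integral_finsetSum _ fun i _ => hint (fun v => ‖v x + _ * v y‖ ^ 4) (by fun_prop),
    integral_add (hint (fun v => 4 * ‖v x‖ ^ 4 + 4 * ‖v y‖ ^ 4) (by fun_prop))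
      (hint (fun v => 16 * (‖v x‖ ^ 2 * ‖v y‖ ^ 2)) (by fun_prop)),
    integral_add (hint (fun v => 4 * ‖v x‖ ^ 4) (by fun_prop))
      (hint (fun v => 4 * ‖v y‖ ^ 4) (by fun_prop)),
    integral_const_mul, integral_const_mul, integral_const_mul, hswap] at hpolar
  have hrot : ∀ i,
      ∫ U, ‖column j U x + ![1, -1, Complex.I, -Complex.I] i * column j U y‖ ^ 4 ∂μ
        = 4 * ∫ U, ‖column j U x‖ ^ 4 ∂μ := fun i =>
    integral_norm_add_mul_pow_four_column μ hxy j (by fin_cases i <;> simp)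
  simp only [Fin.sum_univ_four, hrot] at hpolar
  linarith

theorem integral_norm_pow_four_column (j x : Fin N) :
    ∫ U, ‖column j U x‖ ^ 4 ∂μ = 2 / (N * (N + 1)) := by
  have hN : 1 ≤ N := x.pos
  have hsum := sum_integral_norm_sq_mul_norm_sq_column μ j x
  rw [← Finset.add_sum_erase _ _ (Finset.mem_univ x),
    Finset.sum_congr rfl fun k hk =>
      integral_norm_sq_mul_norm_sq_column μ (Finset.ne_of_mem_erase hk).symm j,
    Finset.sum_const, Finset.card_erase_of_mem (Finset.mem_univ x), Finset.card_univ,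
    Fintype.card_fin, nsmul_eq_mul, Nat.cast_sub hN, Nat.cast_one] at hsum
  simp only [← pow_add] at hsum
  field_simp at hsum ⊢
  linarith

end Moments

/-- **Second Haar moment of the output probability.**
For `N ≥ 1` and a fixed basis index `x`, the second moment of the output probability
of a Haar-random `N × N` unitary is `∫ |⟨x|U|0⟩|⁴ dμ_Haar(U) = 2/(N(N+1))`. -/
theorem haar_second_moment_outProb
    (N : ℕ) [NeZero N] (μHaar : Measure (UG N)) [μHaar.IsHaarMeasure]
    [IsProbabilityMeasure μHaar] (x : Fin N) :
    ∫ U, (outProb x U) ^ 2 ∂μHaar = 2 / (N * (N + 1)) := by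
  simp only [outProb, ← pow_mul]
  exact integral_norm_pow_four_column μHaar 0 x
end
end

section
/- Let G = (V, E) be a finite simple graph on vertex set Fin n, and on the n-qubit Hilbert space (ℂ²)^{⊗n} define the translation-invariant-Ising-type Hamiltonian H := Σ_{(i,j) ∈ E} (π/4) Z_i Z_j − Σ_{v ∈ V} (π/4) deg(v) Z_v, where deg(v) is the degree of v in G. Then the unit-time evolution equals, up to a global phase, the product of controlled-Z gates along all edges: exp(−i H) = e^{iπ|E|/4} · ∏_{(i,j) ∈ E} CZ_{i,j}. -/
/-!
In the computational basis every `Z_i` is diagonal, hence so is `H`. The handshake identity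
`∑_v deg(v) z_v = ∑_{ij ∈ E} (z_i + z_j)` turns the eigenvalue of `H` on a basis state into
`(π/4) ∑_{ij ∈ E} (z_i z_j - z_i - z_j)`. The bond term `z_i z_j - z_i - z_j` equals `-1`
unless both bits are `1`, where it equals `3 = -1 + 4`; since `e^{-iπ} = -1`, each edge
contributes the phase `e^{iπ/4}` times the eigenvalue of `CZ_{ij}`.
-/

noncomputable section

/-- A computational basis label for `n` qubits: a bit string of length `n`. -/
abbrev QVec (n : ℕ) := Fin n → Fin 2

/-- An operator on the `n`-qubit Hilbert space `(ℂ²)^{⊗n}`, written as a matrix in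
the computational basis. -/
abbrev QOp (n : ℕ) := Matrix (QVec n) (QVec n) ℂ

/-- The Pauli-Z matrix `diag(1,−1)` acting on the `i`-th tensor factor. -/
def ZGate (n : ℕ) (i : Fin n) : QOp n :=
  Matrix.diagonal fun s => if s i = 0 then 1 else -1

/-- The controlled-Z gate acting on qubits `i` and `j`: the diagonal unitary that
multiplies a computational basis state by `−1` exactly when both qubits `i` and `j`
are in state `1`. -/
def CZGate (n : ℕ) (i j : Fin n) : QOp n :=
  Matrix.diagonal fun s => if s i = 1 ∧ s j = 1 then -1 else 1

/-- Any two controlled-Z gates commute (they are diagonal matrices). -/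
theorem czGate_commute (n : ℕ) (p q : Fin n × Fin n) :
    Commute (CZGate n p.1 p.2) (CZGate n q.1 q.2) := by
  simp only [Commute, SemiconjBy, CZGate, Matrix.diagonal_mul_diagonal, mul_comm]

/-- The edge set of a simple graph `G` on `Fin n`, with each edge listed once as an
ordered pair `(i, j)` with `i < j`. -/
def edgePairs (n : ℕ) (G : SimpleGraph (Fin n)) [DecidableRel G.Adj] :
    Finset (Fin n × Fin n) :=
  Finset.univ.filter fun p : Fin n × Fin n => G.Adj p.1 p.2 ∧ p.1 < p.2

/-- The translation-invariant-Ising-type Hamiltonian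
`H = Σ_{(i,j) ∈ E} (π/4) Z_i Z_j − Σ_v (π/4) deg(v) Z_v` attached to a graph `G`. -/
def isingHam (n : ℕ) (G : SimpleGraph (Fin n)) [DecidableRel G.Adj] : QOp n :=
  (∑ p ∈ edgePairs n G, ((Real.pi / 4 : ℝ) : ℂ) • (ZGate n p.1 * ZGate n p.2)) -
    ∑ v : Fin n, ((Real.pi / 4 * (G.degree v : ℝ) : ℝ) : ℂ) • ZGate n v

open Finset Matrix Complex
open scoped Real

theorem Matrix.sum_diagonal {ι m α : Type*} [DecidableEq m] [AddCommMonoid α] (s : Finset ι)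
    (d : ι → m → α) : ∑ i ∈ s, diagonal (d i) = diagonal (∑ i ∈ s, d i) :=
  (map_sum (diagonalAddMonoidHom m α) d s).symm

theorem Matrix.noncommProd_diagonal {ι m R : Type*} [Fintype m] [DecidableEq m] [CommSemiring R]
    (s : Finset ι) (d : ι → m → R) (h) :
    s.noncommProd (fun i => diagonal (d i)) h = diagonal fun x => ∏ i ∈ s, d i x := by
  rw [← Finset.prod_fn, ← Finset.noncommProd_eq_prod]
  exact (Finset.map_noncommProd s d _ (diagonalRingHom m R)).symm

namespace SimpleGraph

variable {V M : Type*} [Fintype V] [LinearOrder V] [AddCommMonoid M] (G : SimpleGraph V)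
  [DecidableRel G.Adj]

theorem sum_adj_eq_sum_adj_lt_add_swap (g : V × V → M) :
    ∑ p : V × V with G.Adj p.1 p.2, g p =
      ∑ p : V × V with G.Adj p.1 p.2 ∧ p.1 < p.2, (g p + g p.swap) := by
  rw [sum_add_distrib, ← sum_filter_add_sum_filter_not _ (fun p : V × V => p.1 < p.2),
    filter_filter]
  congr 1
  refine sum_nbij' Prod.swap Prod.swap ?_ ?_ (fun _ _ => rfl) (fun _ _ => rfl) (fun _ _ => rfl)
  all_goals
    intro p hp
    simp only [mem_filter, mem_univ, true_and, Prod.fst_swap, Prod.snd_swap] at hp ⊢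
  · exact ⟨hp.1.symm, lt_of_le_of_ne (not_lt.1 hp.2) hp.1.ne.symm⟩
  · exact ⟨hp.1.symm, hp.2.not_gt⟩

theorem sum_degree_smul_eq_sum_adj_lt (f : V → M) :
    ∑ v, G.degree v • f v = ∑ p : V × V with G.Adj p.1 p.2 ∧ p.1 < p.2, (f p.1 + f p.2) := by
  refine Eq.trans ?_ (G.sum_adj_eq_sum_adj_lt_add_swap fun p => f p.1)
  rw [sum_filter, Fintype.sum_prod_type]
  refine sum_congr rfl fun v _ => ?_
  rw [← card_neighborFinset_eq_degree, neighborFinset_eq_filter, ← sum_const, sum_filter]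

end SimpleGraph

def zSign (b : Fin 2) : ℂ := if b = 0 then 1 else -1

def czSign (a b : Fin 2) : ℂ := if a = 1 ∧ b = 1 then -1 else 1

def bondEnergy (a b : Fin 2) : ℂ := zSign a * zSign b - zSign a - zSign b

theorem bondEnergy_eq (a b : Fin 2) : bondEnergy a b = if a = 1 ∧ b = 1 then 3 else -1 := by
  fin_cases a <;> fin_cases b <;> norm_num [bondEnergy, zSign]

theorem cexp_bondEnergy (a b : Fin 2) :
    cexp (-I * (π / 4 * bondEnergy a b)) = cexp (I * π / 4) * czSign a b := by
  rw [bondEnergy_eq, czSign]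
  split_ifs
  · rw [show -I * (π / 4 * 3) = I * π / 4 - π * I by ring, exp_sub, exp_pi_mul_I]
    ring
  · rw [mul_one]
    congr 1
    ring

theorem cexp_sum_bondEnergy {ι : Type*} (s : Finset ι) (a b : ι → Fin 2) :
    cexp (-I * ∑ i ∈ s, π / 4 * bondEnergy (a i) (b i)) =
      cexp (I * π * s.card / 4) * ∏ i ∈ s, czSign (a i) (b i) := by
  have hphase : cexp (I * π * s.card / 4) = ∏ _i ∈ s, cexp (I * π / 4) := by
    rw [prod_const, ← exp_nat_mul]
    congr 1
    ring
  rw [mul_sum, exp_sum, hphase, ← prod_mul_distrib]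
  exact prod_congr rfl fun i _ => cexp_bondEnergy (a i) (b i)

theorem zGate_eq_diagonal (n : ℕ) (i : Fin n) : ZGate n i = diagonal fun s => zSign (s i) := rfl

theorem noncommProd_czGate (n : ℕ) (s : Finset (Fin n × Fin n)) :
    s.noncommProd (fun p => CZGate n p.1 p.2) (fun p _ q _ _ => czGate_commute n p q) =
      diagonal fun x => ∏ p ∈ s, czSign (x p.1) (x p.2) :=
  noncommProd_diagonal s _ _

theorem isingHam_eq_diagonal (n : ℕ) (G : SimpleGraph (Fin n)) [DecidableRel G.Adj] :
    isingHam n G =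
      diagonal fun s => ∑ p ∈ edgePairs n G, π / 4 * bondEnergy (s p.1) (s p.2) := by
  simp only [isingHam, zGate_eq_diagonal, diagonal_mul_diagonal, ← diagonal_smul, sum_diagonal,
    diagonal_sub]
  congr 1
  funext s
  have hdeg : ∑ v, ((π / 4 * G.degree v : ℝ) : ℂ) * zSign (s v) =
      ∑ p ∈ edgePairs n G, (π / 4 * zSign (s p.1) + π / 4 * zSign (s p.2)) := by
    rw [edgePairs, ← G.sum_degree_smul_eq_sum_adj_lt fun v => (π / 4 : ℂ) * zSign (s v)]
    refine sum_congr rfl fun v _ => ?_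
    push_cast
    rw [nsmul_eq_mul]
    ring
  simp only [Finset.sum_apply, Pi.smul_apply, smul_eq_mul]
  rw [hdeg, ← sum_sub_distrib]
  refine sum_congr rfl fun p _ => ?_
  rw [bondEnergy]
  push_cast
  ring

/-- **The Ising quench implements controlled-Z gates on all edges.**
For the Hamiltonian `H = Σ_{(i,j)∈E} (π/4) Z_iZ_j − Σ_v (π/4) deg(v) Z_v` of a finite
simple graph `G = (V, E)` on `Fin n`, the unit-time evolution equals, up to the
global phase `e^{iπ|E|/4}`, the product of controlled-Z gates along all edges:
`exp(−iH) = e^{iπ|E|/4} · ∏_{(i,j) ∈ E} CZ_{i,j}`. -/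
theorem exp_neg_I_isingHam (n : ℕ) (G : SimpleGraph (Fin n)) [DecidableRel G.Adj] :
    NormedSpace.exp ((-Complex.I) • isingHam n G) =
      Complex.exp (Complex.I * Real.pi * (edgePairs n G).card / 4) •
        (edgePairs n G).noncommProd (fun p => CZGate n p.1 p.2)
          (fun p _ q _ _ => czGate_commute n p q) := by
  rw [noncommProd_czGate, isingHam_eq_diagonal, ← diagonal_smul, Matrix.exp_diagonal,
    ← diagonal_smul]
  congr 1
  funext s
  rw [Pi.coe_exp, ← exp_eq_exp_ℂ]
  exact cexp_sum_bondEnergy _ _ _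
end
end
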